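/- arXiv:2008.13151 — 6 statements merged into one kernel-verified Lean document; each statement's English description precedes it below -/
import Mathlib

section
/- For the Generalized Randomized Response mechanism GRR^α with output probabilities P(Y=y|X=x) = e^α/(e^α + a − 1) if y = x and 1/(e^α + a − 1) otherwise, the maximal LIP leakage with respect to S equals max_{x,s} | ln( (1 + (e^α − 1) p_{x|s}) / (1 + (e^α − 1) p_x) ) |. That is, for all y, s: P(Y=y|S=s)/P(Y=y) = (1 + (e^α − 1) p_{y|s}) / (1 + (e^α − 1) p_y). -/
/-!
GRR sends `x` to `y` with probability `(1 + (e^α - 1) [y = x]) / c`, where `c = e^α + a - 1`.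
Averaging over `p_{·|s}` gives `P(Y=y|S=s) = (1 + (e^α - 1) p_{y|s}) / c`, averaging that over
`p_S` gives `P(Y=y) = (1 + (e^α - 1) p_y) / c`, and the normaliser `c` cancels in the ratio.
-/

open Finset

lemma sum_mul_ite_div {ι K : Type*} [Fintype ι] [DecidableEq ι] [Field K]
    (w : ι → K) (hw : ∑ x, w x = 1) (y : ι) (e c : K) :
    ∑ x, w x * (if y = x then e / c else 1 / c) = (1 + (e - 1) * w y) / c := by
  have hsplit : ∀ x, w x * (if y = x then e / c else 1 / c)
      = w x / c + (e - 1) / c * (if y = x then w x else 0) := by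
    intro x
    split_ifs <;> ring
  simp only [hsplit, sum_add_distrib, ← sum_div, hw, ← mul_sum, sum_ite_eq, mem_univ, if_true]
  ring

lemma sum_mul_affine_div {S K : Type*} [Fintype S] [Field K]
    (p q : S → K) (hp : ∑ s, p s = 1) (k c : K) :
    ∑ s, p s * ((1 + k * q s) / c) = (1 + k * ∑ s, p s * q s) / c := by
  calc ∑ s, p s * ((1 + k * q s) / c) = (∑ s, p s + k * ∑ s, p s * q s) / c := by
        rw [mul_sum, ← sum_add_distrib, sum_div]
        congr 1 with s
        ring
    _ = (1 + k * ∑ s, p s * q s) / c := by rw [hp]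

theorem grr_lip_ratio_general
    {a : ℕ} {S : Type*} [Fintype S]
    (pS : S → ℝ) (pXgS : S → Fin a → ℝ) (α : ℝ)
    (hpS1 : ∑ s, pS s = 1)
    (hpXgS1 : ∀ s, ∑ x, pXgS s x = 1) :
    ∀ (y : Fin a) (s : S),
      (∑ x, pXgS s x *
          (if y = x then Real.exp α / (Real.exp α + a - 1) else 1 / (Real.exp α + a - 1))) /
      (∑ s', pS s' * ∑ x, pXgS s' x *
          (if y = x then Real.exp α / (Real.exp α + a - 1) else 1 / (Real.exp α + a - 1)))
      = (1 + (Real.exp α - 1) * pXgS s y) /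
        (1 + (Real.exp α - 1) * ∑ s', pS s' * pXgS s' y) := by
  intro y s
  have hc : Real.exp α + a - 1 ≠ 0 := by
    have ha : (1 : ℝ) ≤ a := by exact_mod_cast y.pos
    linarith [Real.exp_pos α]
  simp only [sum_mul_ite_div _ (hpXgS1 _)]
  rw [sum_mul_affine_div _ _ hpS1, div_div_div_cancel_right₀ hc]

/-- For the Generalised Randomized Response mechanism `GRR^α`, the LIP ratio satisfies
`P(Y=y|S=s)/P(Y=y) = (1 + (e^α − 1) p_{y|s}) / (1 + (e^α − 1) p_y)`,
where `p_y = ∑ s, pS s * pXgS s y`. -/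
theorem grr_lip_ratio
    {a : ℕ} (ha : 1 ≤ a) {S : Type*} [Fintype S]
    (pS : S → ℝ) (pXgS : S → Fin a → ℝ) (α : ℝ) (hα : 0 ≤ α)
    (hpS : ∀ s, 0 ≤ pS s) (hpS1 : ∑ s, pS s = 1)
    (hpXgS : ∀ s x, 0 ≤ pXgS s x) (hpXgS1 : ∀ s, ∑ x, pXgS s x = 1) :
    ∀ (y : Fin a) (s : S),
      (∑ x, pXgS s x *
          (if y = x then Real.exp α / (Real.exp α + a - 1) else 1 / (Real.exp α + a - 1))) /
      (∑ s', pS s' * ∑ x, pXgS s' x *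
          (if y = x then Real.exp α / (Real.exp α + a - 1) else 1 / (Real.exp α + a - 1)))
      = (1 + (Real.exp α - 1) * pXgS s y) /
        (1 + (Real.exp α - 1) * ∑ s', pS s' * pXgS s' y) :=
  grr_lip_ratio_general pS pXgS α hpS1 hpXgS1
end

section
/- For the Conditional Reporting mechanism CR^α, the conditional output distribution satisfies P(CR^α(X,S) = y | S = s) = ( (e^α − 1) p_{y|s} + Σ_{s'} p_{y|s'} ) / (e^α + c − 1), and the marginal satisfies P(CR^α(X,S) = y) = ( (e^α − 1) p_y + Σ_{s'} p_{y|s'} ) / (e^α + c − 1). Consequently, CR^α satisfies ε-LIP with respect to S if and only if ε ≥ L(α), where L(α) = max_{y,s} | ln( ((e^α − 1) p_{y|s} + Σ_{s'} p_{y|s'}) / ((e^α − 1) p_y + Σ_{s'} p_{y|s'}) ) |. -/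
open Finset in
/-- For the Conditional Reporting mechanism `CR^α`:
the conditional output distribution is
`P(CR^α(X,S)=y | S=s) = ((e^α−1) p_{y|s} + ∑_{s'} p_{y|s'}) / (e^α + c − 1)`,
the marginal is `P(CR^α(X,S)=y) = ((e^α−1) p_y + ∑_{s'} p_{y|s'}) / (e^α + c − 1)`,
and `CR^α` satisfies ε-LIP iff `ε ≥ L(α)`, i.e. iff every `|log` of the LIP
`ratio|` is at most `ε`. -/
theorem cr_lip_characterisation
    {c : ℕ} (hc : 1 ≤ c) {X : Type*} [Fintype X] [DecidableEq X]
    (pS : Fin c → ℝ) (pXgS : Fin c → X → ℝ) (α ε : ℝ) (hα : 0 ≤ α)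
    (hpS : ∀ s, 0 < pS s) (hpS1 : ∑ s, pS s = 1)
    (hpXgS : ∀ s x, 0 < pXgS s x) (hpXgS1 : ∀ s, ∑ x, pXgS s x = 1) :
    (∀ (s : Fin c) (y : X),
      (∑ x, pXgS s x *
          ((Real.exp α * (if y = x then 1 else 0) + ∑ s' ∈ univ.erase s, pXgS s' y) /
            (Real.exp α + c - 1)))
      = ((Real.exp α - 1) * pXgS s y + ∑ s', pXgS s' y) / (Real.exp α + c - 1)) ∧
    (∀ y : X,
      (∑ s, pS s *
          (((Real.exp α - 1) * pXgS s y + ∑ s', pXgS s' y) / (Real.exp α + c - 1)))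
      = ((Real.exp α - 1) * (∑ s, pS s * pXgS s y) + ∑ s', pXgS s' y) /
          (Real.exp α + c - 1)) ∧
    ((∀ (s : Fin c) (y : X),
        Real.exp (-ε) ≤
          ((Real.exp α - 1) * pXgS s y + ∑ s', pXgS s' y) /
            ((Real.exp α - 1) * (∑ s'', pS s'' * pXgS s'' y) + ∑ s', pXgS s' y) ∧
        ((Real.exp α - 1) * pXgS s y + ∑ s', pXgS s' y) /
            ((Real.exp α - 1) * (∑ s'', pS s'' * pXgS s'' y) + ∑ s', pXgS s' y)
          ≤ Real.exp ε)
      ↔ (∀ (s : Fin c) (y : X),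
          |Real.log (((Real.exp α - 1) * pXgS s y + ∑ s', pXgS s' y) /
              ((Real.exp α - 1) * (∑ s'', pS s'' * pXgS s'' y) + ∑ s', pXgS s' y))|
            ≤ ε)) := by
  have hcpos : (0:ℝ) < c := by exact_mod_cast Nat.lt_of_lt_of_le Nat.zero_lt_one hc
  have hexp1 : (0:ℝ) ≤ Real.exp α - 1 := by
    have := Real.one_le_exp hα; linarith
  refine ⟨?_, ?_, ?_⟩
  · intro s y
    simp only [mul_div_assoc']
    rw [← Finset.sum_div]
    congr 1
    have h1 : ∑ x, pXgS s x * (Real.exp α * (if y = x then 1 else 0)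
        + ∑ s' ∈ univ.erase s, pXgS s' y)
        = (∑ x, pXgS s x * (Real.exp α * (if y = x then 1 else 0)))
          + (∑ x, pXgS s x) * (∑ s' ∈ univ.erase s, pXgS s' y) := by
      rw [Finset.sum_mul, ← Finset.sum_add_distrib]
      exact Finset.sum_congr rfl fun x _ => by ring
    rw [h1, hpXgS1]
    have h2 : ∑ x, pXgS s x * (Real.exp α * (if y = x then 1 else 0))
        = Real.exp α * pXgS s y := by
      rw [Finset.sum_eq_single y]
      · simp [mul_comm]
      · intro b _ hb; simp [Ne.symm hb]
      · simp
    rw [h2]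
    have h3 : ∑ s', pXgS s' y = pXgS s y + ∑ s' ∈ univ.erase s, pXgS s' y := by
      rw [← Finset.add_sum_erase _ _ (Finset.mem_univ s)]
    rw [h3]; ring
  · intro y
    simp only [mul_div_assoc']
    rw [← Finset.sum_div]
    congr 1
    have : ∑ s, pS s * ((Real.exp α - 1) * pXgS s y + ∑ s', pXgS s' y)
        = (Real.exp α - 1) * (∑ s, pS s * pXgS s y) + (∑ s, pS s) * (∑ s', pXgS s' y) := by
      rw [Finset.mul_sum, Finset.sum_mul, ← Finset.sum_add_distrib]
      exact Finset.sum_congr rfl fun s _ => by ring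
    rw [this, hpS1, one_mul]
  · have hratio : ∀ (s : Fin c) (y : X),
        0 < ((Real.exp α - 1) * pXgS s y + ∑ s', pXgS s' y) /
            ((Real.exp α - 1) * (∑ s'', pS s'' * pXgS s'' y) + ∑ s', pXgS s' y) := by
      intro s y
      have hsum : 0 < ∑ s', pXgS s' y :=
        Finset.sum_pos (fun s' _ => hpXgS s' y) ⟨s, Finset.mem_univ s⟩
      have hsum2 : 0 ≤ ∑ s'', pS s'' * pXgS s'' y :=
        Finset.sum_nonneg fun s'' _ => le_of_lt (mul_pos (hpS s'') (hpXgS s'' y))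
      have hnum : 0 < (Real.exp α - 1) * pXgS s y + ∑ s', pXgS s' y := by
        have := mul_nonneg hexp1 (le_of_lt (hpXgS s y)); linarith
      have hden : 0 < (Real.exp α - 1) * (∑ s'', pS s'' * pXgS s'' y) + ∑ s', pXgS s' y := by
        have := mul_nonneg hexp1 hsum2; linarith
      exact div_pos hnum hden
    constructor
    · intro h s y
      obtain ⟨h1, h2⟩ := h s y
      rw [abs_le]
      constructor
      · rw [← Real.log_exp (-ε)]
        exact Real.log_le_log (Real.exp_pos _) h1
      · calc Real.log _ ≤ Real.log (Real.exp ε) := Real.log_le_log (hratio s y) h2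
          _ = ε := Real.log_exp ε
    · intro h s y
      have := h s y
      rw [abs_le] at this
      obtain ⟨h1, h2⟩ := this
      constructor
      · rw [← Real.exp_log (hratio s y)]
        exact Real.exp_le_exp.2 (by linarith)
      · rw [← Real.exp_log (hratio s y)]
        exact Real.exp_le_exp.2 h2
end

section
/- The Conditional Reporting mechanism CR^α satisfies α-LDP with respect to S: for all outputs y and all s, s' ∈ 𝒮, P(CR^α(X,S)=y | S=s) ≤ e^α · P(CR^α(X,S)=y | S=s'). In particular it satisfies α-LIP. -/
open Finset in
/-- The Conditional Reporting mechanism `CR^α` satisfies α-LDP with respect to `S`: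
`P(CR^α(X,S)=y|S=s) ≤ e^α · P(CR^α(X,S)=y|S=s')`, where
`P(CR^α(X,S)=y|S=s) = (e^α p_{y|s} + ∑_{t≠s} p_{y|t}) / (e^α + c − 1)`.
In particular it satisfies α-LIP. -/
theorem cr_satisfies_ldp
    {c : ℕ} (hc : 1 ≤ c) {X : Type*} [Fintype X]
    (pS : Fin c → ℝ) (pXgS : Fin c → X → ℝ) (α : ℝ) (hα : 0 ≤ α)
    (hpS : ∀ s, 0 ≤ pS s) (hpS1 : ∑ s, pS s = 1)
    (hpXgS : ∀ s x, 0 ≤ pXgS s x) :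
    (∀ (y : X) (s s' : Fin c),
      (Real.exp α * pXgS s y + ∑ t ∈ univ.erase s, pXgS t y) / (Real.exp α + c - 1)
        ≤ Real.exp α *
          ((Real.exp α * pXgS s' y + ∑ t ∈ univ.erase s', pXgS t y) /
            (Real.exp α + c - 1))) ∧
    (∀ (y : X) (s : Fin c),
      0 < (∑ s', pS s' *
          ((Real.exp α * pXgS s' y + ∑ t ∈ univ.erase s', pXgS t y) /
            (Real.exp α + c - 1))) →
      Real.exp (-α) ≤
        ((Real.exp α * pXgS s y + ∑ t ∈ univ.erase s, pXgS t y) / (Real.exp α + c - 1)) /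
          (∑ s', pS s' *
            ((Real.exp α * pXgS s' y + ∑ t ∈ univ.erase s', pXgS t y) /
              (Real.exp α + c - 1))) ∧
      ((Real.exp α * pXgS s y + ∑ t ∈ univ.erase s, pXgS t y) / (Real.exp α + c - 1)) /
          (∑ s', pS s' *
            ((Real.exp α * pXgS s' y + ∑ t ∈ univ.erase s', pXgS t y) /
              (Real.exp α + c - 1)))
        ≤ Real.exp α) := by
  have he1 : (1 : ℝ) ≤ Real.exp α := Real.one_le_exp hα
  have hD : 0 < Real.exp α + (c : ℝ) - 1 := by
    have : (1 : ℝ) ≤ (c : ℝ) := by exact_mod_cast hc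
    linarith
  set P : X → Fin c → ℝ := fun y s =>
    (Real.exp α * pXgS s y + ∑ t ∈ univ.erase s, pXgS t y) / (Real.exp α + c - 1) with hP
  have hPnn : ∀ y s, 0 ≤ P y s := by
    intro y s
    apply div_nonneg _ hD.le
    have := Finset.sum_nonneg (fun t (_ : t ∈ univ.erase s) => hpXgS t y)
    have := hpXgS s y
    nlinarith
  have key : ∀ (y : X) (s s' : Fin c), P y s ≤ Real.exp α * P y s' := by
    intro y s s'
    rw [hP]
    simp only
    rw [mul_div_assoc']
    apply (div_le_div_iff_of_pos_right hD).mpr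
    · have hs : pXgS s y + ∑ t ∈ univ.erase s, pXgS t y = ∑ t, pXgS t y :=
        Finset.add_sum_erase univ (fun t => pXgS t y) (mem_univ s)
      have hs' : pXgS s' y + ∑ t ∈ univ.erase s', pXgS t y = ∑ t, pXgS t y :=
        Finset.add_sum_erase univ (fun t => pXgS t y) (mem_univ s')
      set T := ∑ t, pXgS t y
      have hes : ∑ t ∈ univ.erase s, pXgS t y = T - pXgS s y := by linarith
      have hes' : ∑ t ∈ univ.erase s', pXgS t y = T - pXgS s' y := by linarith
      rw [hes, hes']
      have hu : 0 ≤ pXgS s y := hpXgS s y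
      have hu' : 0 ≤ pXgS s' y := hpXgS s' y
      have hsnn : 0 ≤ ∑ t ∈ univ.erase s, pXgS t y :=
        Finset.sum_nonneg (fun t _ => hpXgS t y)
      have huT : pXgS s y ≤ T := by linarith
      nlinarith [mul_nonneg (sub_nonneg.mpr he1) (sub_nonneg.mpr huT),
        mul_nonneg (mul_nonneg (Real.exp_pos α).le (sub_nonneg.mpr he1)) hu']
  constructor
  · exact key
  · intro y s hQ
    set Q := ∑ s', pS s' * P y s' with hQdef
    have hup : P y s ≤ Real.exp α * Q := by
      have : ∀ s' ∈ univ, pS s' * (Real.exp (-α) * P y s) ≤ pS s' * P y s' := by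
        intro s' _
        apply mul_le_mul_of_nonneg_left _ (hpS s')
        rw [Real.exp_neg]
        rw [inv_mul_le_iff₀ (Real.exp_pos α)]
        exact key y s s'
      have hle := Finset.sum_le_sum this
      rw [← Finset.sum_mul, hpS1, one_mul] at hle
      rw [Real.exp_neg] at hle
      calc P y s = Real.exp α * (Real.exp α)⁻¹ * P y s := by
              rw [mul_inv_cancel₀ (Real.exp_pos α).ne', one_mul]
        _ = Real.exp α * ((Real.exp α)⁻¹ * P y s) := by ring
        _ ≤ Real.exp α * Q := by
              exact mul_le_mul_of_nonneg_left hle (Real.exp_pos α).le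
    have hdown : Q ≤ Real.exp α * P y s := by
      have : ∀ s' ∈ univ, pS s' * P y s' ≤ pS s' * (Real.exp α * P y s) := by
        intro s' _
        exact mul_le_mul_of_nonneg_left (key y s' s) (hpS s')
      have hle := Finset.sum_le_sum this
      rw [← Finset.sum_mul, hpS1, one_mul] at hle
      exact hle
    constructor
    · rw [le_div_iff₀ hQ, Real.exp_neg, inv_mul_le_iff₀ (Real.exp_pos α)]
      exact hdown
    · rw [div_le_iff₀ hQ]
      exact hup
end

section
/- If Q : 𝒳 → 𝒴 satisfies ε-LIP with respect to S for every joint distribution p_{S,X} on 𝒮 × 𝒳 with full support (equivalently, for the family of all priors), then Q satisfies ε-LIP with respect to X itself: for all x, y with P(X=x) > 0 and P(Y=y) > 0, e^{-ε} ≤ P(Y=y|X=x)/P(Y=y) ≤ e^ε. -/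
/-!
Let `S` be a copy of `X` and couple it with `X` by the mixture, with weights `1 - δ` and `δ`,
of the perfectly correlated coupling `S = X` and the independent coupling with marginals `pX`.
This joint distribution has full support for `0 < δ < 1`, its output marginal is that of `pX`,
and the conditional output distribution given `S = x` is `(1 - δ) Q x + δ P_Y`. Hence the LIP
ratio at `S = x` is `(1 - δ) r + δ`, where `r` is the LIP ratio at `X = x`, and letting `δ → 0`
transfers the bounds to `r`.
-/

open Finset Filter Topology

theorem IsClosed.mem_of_forall_lineMap_mem {E : Type*} [AddCommGroup E] [Module ℝ E]
    [TopologicalSpace E] [IsTopologicalAddGroup E] [ContinuousSMul ℝ E] {C : Set E}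
    (hC : IsClosed C) {a b : E} (h : ∀ δ ∈ Set.Ioo (0 : ℝ) 1, AffineMap.lineMap a b δ ∈ C) :
    a ∈ C := by
  have hlim : Tendsto (AffineMap.lineMap a b : ℝ → E) (𝓝[>] 0) (𝓝 a) := by
    simpa using (AffineMap.lineMap_continuous (R := ℝ) (p := a) (q := b)).tendsto' 0 _ (by simp)
      |>.mono_left nhdsWithin_le_nhds
  exact hC.mem_of_tendsto hlim (mem_of_superset (Ioo_mem_nhdsGT one_pos) h)

section MixedCoupling

variable {X : Type*} [DecidableEq X] (pX : X → ℝ) (δ : ℝ)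

def mixedCoupling (s x : X) : ℝ :=
  (1 - δ) * (if x = s then pX s else 0) + δ * (pX s * pX x)

variable {pX δ}

theorem mixedCoupling_pos (hpX : ∀ x, 0 < pX x) (hδ : δ ∈ Set.Ioo (0 : ℝ) 1) (s x : X) :
    0 < mixedCoupling pX δ s x := by
  have hdiag : 0 ≤ (1 - δ) * (if x = s then pX s else 0) :=
    mul_nonneg (by linarith [hδ.2]) (by split_ifs <;> simp [(hpX s).le])
  exact add_pos_of_nonneg_of_pos hdiag (mul_pos hδ.1 (mul_pos (hpX s) (hpX x)))

variable [Fintype X]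

theorem sum_mixedCoupling_mul (f : X → ℝ) (s : X) :
    ∑ x, mixedCoupling pX δ s x * f x = pX s * ((1 - δ) * f s + δ * ∑ x, pX x * f x) := by
  simp only [mixedCoupling, add_mul, sum_add_distrib, mul_assoc, ← mul_sum, ite_mul, zero_mul,
    sum_ite_eq', mem_univ, if_true]
  ring

theorem sum_mixedCoupling (hpX1 : ∑ x, pX x = 1) (s : X) :
    ∑ x, mixedCoupling pX δ s x = pX s := by
  simpa [hpX1] using sum_mixedCoupling_mul (pX := pX) (δ := δ) (fun _ => 1) s

theorem sum_sum_mixedCoupling_mul (hpX1 : ∑ x, pX x = 1) (f : X → ℝ) :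
    ∑ s, ∑ x, mixedCoupling pX δ s x * f x = ∑ x, pX x * f x := by
  calc ∑ s, ∑ x, mixedCoupling pX δ s x * f x
      = ∑ s, ((1 - δ) * (pX s * f s) + δ * (∑ x, pX x * f x) * pX s) :=
        sum_congr rfl fun s _ => by rw [sum_mixedCoupling_mul]; ring
    _ = ∑ x, pX x * f x := by rw [sum_add_distrib, ← mul_sum, ← mul_sum, hpX1]; ring

end MixedCoupling

theorem universal_lip_implies_lip_wrt_X_general
    {X Y : Type*} [Fintype X]
    (Q : X → Y → ℝ) (ε : ℝ)
    (h : ∀ (S : Type) [Fintype S] (p : S → X → ℝ),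
      (∀ s x, 0 < p s x) → (∑ s, ∑ x, p s x) = 1 →
      ∀ (s : S) (y : Y), 0 < (∑ s', ∑ x, p s' x * Q x y) →
        Real.exp (-ε) ≤
          ((∑ x, p s x * Q x y) / (∑ x, p s x)) / (∑ s', ∑ x, p s' x * Q x y) ∧
        ((∑ x, p s x * Q x y) / (∑ x, p s x)) / (∑ s', ∑ x, p s' x * Q x y)
          ≤ Real.exp ε) :
    ∀ (pX : X → ℝ), (∀ x, 0 < pX x) → (∑ x, pX x = 1) →
      ∀ (x : X) (y : Y), 0 < (∑ x', pX x' * Q x' y) →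
        Real.exp (-ε) ≤ Q x y / (∑ x', pX x' * Q x' y) ∧
        Q x y / (∑ x', pX x' * Q x' y) ≤ Real.exp ε := by
  classical
  intro pX hpX hpX1 x y hD
  set D := ∑ x', pX x' * Q x' y
  -- `X` may live in a higher universe than the secret spaces, so index the secrets by `Fin`.
  let e := (Fintype.equivFin X).symm
  suffices Q x y / D ∈ Set.Icc (Real.exp (-ε)) (Real.exp ε) from this
  refine isClosed_Icc.mem_of_forall_lineMap_mem (b := 1) fun δ hδ => ?_
  have hsum s : ∑ x', mixedCoupling pX δ (e s) x' = pX (e s) := sum_mixedCoupling hpX1 _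
  have hsumQ s : ∑ x', mixedCoupling pX δ (e s) x' * Q x' y =
      pX (e s) * ((1 - δ) * Q (e s) y + δ * D) := sum_mixedCoupling_mul _ _
  have htotal : ∑ s, ∑ x', mixedCoupling pX δ (e s) x' * Q x' y = D :=
    (e.sum_comp fun s => ∑ x', mixedCoupling pX δ s x' * Q x' y).trans
      (sum_sum_mixedCoupling_mul hpX1 _)
  have hp1 : ∑ s, ∑ x', mixedCoupling pX δ (e s) x' = 1 := by
    simp only [hsum, e.sum_comp pX, hpX1]
  have hlip := h _ (fun s => mixedCoupling pX δ (e s)) (fun s => mixedCoupling_pos hpX hδ (e s))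
    hp1 (e.symm x) y (htotal ▸ hD)
  rw [htotal, hsumQ, hsum, e.apply_symm_apply,
    mul_div_cancel_left₀ _ (hpX x).ne'] at hlip
  have hratio : AffineMap.lineMap (Q x y / D) 1 δ = ((1 - δ) * Q x y + δ * D) / D := by
    rw [AffineMap.lineMap_apply_ring]
    field_simp
  rw [hratio]
  exact hlip

/-- If a channel `Q` satisfies ε-LIP with respect to `S` for every finite secret space
`S` and every full-support joint distribution `p` on `S × X`, then `Q` satisfies ε-LIP
with respect to `X` itself (for any full-support prior on `X`). -/
theorem universal_lip_implies_lip_wrt_X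
    {X Y : Type*} [Fintype X] [Fintype Y]
    (Q : X → Y → ℝ) (ε : ℝ) (hε : 0 ≤ ε)
    (hQ : ∀ x y, 0 ≤ Q x y) (hQ1 : ∀ x, ∑ y, Q x y = 1)
    (h : ∀ (S : Type) [Fintype S] (p : S → X → ℝ),
      (∀ s x, 0 < p s x) → (∑ s, ∑ x, p s x) = 1 →
      ∀ (s : S) (y : Y), 0 < (∑ s', ∑ x, p s' x * Q x y) →
        Real.exp (-ε) ≤
          ((∑ x, p s x * Q x y) / (∑ x, p s x)) / (∑ s', ∑ x, p s' x * Q x y) ∧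
        ((∑ x, p s x * Q x y) / (∑ x, p s x)) / (∑ s', ∑ x, p s' x * Q x y)
          ≤ Real.exp ε) :
    ∀ (pX : X → ℝ), (∀ x, 0 < pX x) → (∑ x, pX x = 1) →
      ∀ (x : X) (y : Y), 0 < (∑ x', pX x' * Q x' y) →
        Real.exp (-ε) ≤ Q x y / (∑ x', pX x' * Q x' y) ∧
        Q x y / (∑ x', pX x' * Q x' y) ≤ Real.exp ε :=
  universal_lip_implies_lip_wrt_X_general Q ε h
end

section
/- The function α ↦ (1 + (e^α − 1) p) / (1 + (e^α − 1) q) is monotone nondecreasing in α ∈ [0,∞) when p ≥ q ≥ 0, and monotone nonincreasing when q ≥ p ≥ 0. Consequently, the GRR leakage LIP(GRR^α) = max_{x,s} | ln( (1 + (e^α − 1) p_{x|s}) / (1 + (e^α − 1) p_x) ) | is nondecreasing in α, with value 0 at α = 0. -/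
private lemma grr_denom_pos {b t : ℝ} (hb : 0 ≤ b) (ht : 0 ≤ t) :
    0 < 1 + t * b := by nlinarith

private lemma grr_mono_aux {a b : ℝ} (hb : 0 ≤ b) (hba : b ≤ a) :
    MonotoneOn (fun α => (1 + (Real.exp α - 1) * a) / (1 + (Real.exp α - 1) * b))
      (Set.Ici (0 : ℝ)) := by
  intro x hx y hy hxy
  have hx0 : (0:ℝ) ≤ Real.exp x - 1 := by
    have := Real.one_le_exp (Set.mem_Ici.mp hx); linarith
  have hxy' : Real.exp x - 1 ≤ Real.exp y - 1 := by
    have := Real.exp_le_exp.mpr hxy; linarith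
  have hy0 : (0:ℝ) ≤ Real.exp y - 1 := le_trans hx0 hxy'
  have d1 := grr_denom_pos hb hx0
  have d2 := grr_denom_pos hb hy0
  rw [div_le_div_iff₀ d1 d2]
  nlinarith [mul_nonneg (sub_nonneg.mpr hxy') (sub_nonneg.mpr hba)]

private lemma grr_anti_aux {a b : ℝ} (ha : 0 ≤ a) (hab : a ≤ b) :
    AntitoneOn (fun α => (1 + (Real.exp α - 1) * a) / (1 + (Real.exp α - 1) * b))
      (Set.Ici (0 : ℝ)) := by
  intro x hx y hy hxy
  have hx0 : (0:ℝ) ≤ Real.exp x - 1 := by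
    have := Real.one_le_exp (Set.mem_Ici.mp hx); linarith
  have hxy' : Real.exp x - 1 ≤ Real.exp y - 1 := by
    have := Real.exp_le_exp.mpr hxy; linarith
  have hy0 : (0:ℝ) ≤ Real.exp y - 1 := le_trans hx0 hxy'
  have hb : 0 ≤ b := le_trans ha hab
  have d1 := grr_denom_pos hb hx0
  have d2 := grr_denom_pos hb hy0
  rw [div_le_div_iff₀ d2 d1]
  nlinarith [mul_nonneg (sub_nonneg.mpr hxy') (sub_nonneg.mpr hab)]

private lemma grr_abs_log_mono {a b : ℝ} (ha : 0 ≤ a) (hb : 0 ≤ b) :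
    MonotoneOn (fun α => |Real.log ((1 + (Real.exp α - 1) * a) / (1 + (Real.exp α - 1) * b))|)
      (Set.Ici (0 : ℝ)) := by
  intro x hx y hy hxy
  have hx0 : (0:ℝ) ≤ Real.exp x - 1 := by
    have := Real.one_le_exp (Set.mem_Ici.mp hx); linarith
  have hy0 : (0:ℝ) ≤ Real.exp y - 1 := by
    have := Real.one_le_exp (Set.mem_Ici.mp hy); linarith
  have dax := grr_denom_pos ha hx0
  have day := grr_denom_pos ha hy0
  have dbx := grr_denom_pos hb hx0
  have dby := grr_denom_pos hb hy0
  rcases le_total b a with h | h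
  · -- ratio ≥ 1, |log| = log
    have r1 : (1:ℝ) ≤ (1 + (Real.exp x - 1) * a) / (1 + (Real.exp x - 1) * b) := by
      rw [le_div_iff₀ dbx]; nlinarith [mul_le_mul_of_nonneg_left h hx0]
    have r2 : (1:ℝ) ≤ (1 + (Real.exp y - 1) * a) / (1 + (Real.exp y - 1) * b) := by
      rw [le_div_iff₀ dby]; nlinarith [mul_le_mul_of_nonneg_left h hy0]
    dsimp only
    rw [abs_of_nonneg (Real.log_nonneg r1), abs_of_nonneg (Real.log_nonneg r2)]
    exact Real.log_le_log (by linarith) (grr_mono_aux hb h hx hy hxy)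
  · -- ratio ≤ 1, > 0, |log| = -log
    have r1 : (1 + (Real.exp x - 1) * a) / (1 + (Real.exp x - 1) * b) ≤ 1 := by
      rw [div_le_one dbx]; nlinarith [mul_le_mul_of_nonneg_left h hx0]
    have r2 : (1 + (Real.exp y - 1) * a) / (1 + (Real.exp y - 1) * b) ≤ 1 := by
      rw [div_le_one dby]; nlinarith [mul_le_mul_of_nonneg_left h hy0]
    have p1 : 0 < (1 + (Real.exp x - 1) * a) / (1 + (Real.exp x - 1) * b) :=
      div_pos dax dbx
    have p2 : 0 < (1 + (Real.exp y - 1) * a) / (1 + (Real.exp y - 1) * b) :=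
      div_pos day dby
    dsimp only
    rw [abs_of_nonpos (Real.log_nonpos (le_of_lt p1) r1),
        abs_of_nonpos (Real.log_nonpos (le_of_lt p2) r2)]
    have := Real.log_le_log p2 (grr_anti_aux ha h hx hy hxy)
    linarith

/-- The function `α ↦ (1+(e^α−1)p)/(1+(e^α−1)q)` is nondecreasing on `[0,∞)` when
`p ≥ q ≥ 0` and nonincreasing when `q ≥ p ≥ 0`; consequently the GRR leakage
`LIP(GRR^α) = max_{x,s} |ln((1+(e^α−1)p_{x|s})/(1+(e^α−1)p_x))|` is nondecreasing in
`α` and equals `0` at `α = 0`. -/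
theorem grr_leakage_monotone
    {X S : Type*} [Fintype X] [Fintype S] [Nonempty X] [Nonempty S]
    (p q : ℝ) (hp : p ∈ Set.Icc (0 : ℝ) 1) (hq : q ∈ Set.Icc (0 : ℝ) 1)
    (pS : S → ℝ) (pXgS : S → X → ℝ) (pX : X → ℝ)
    (hpS : ∀ s, 0 ≤ pS s) (hpS1 : ∑ s, pS s = 1)
    (hpXgS : ∀ s x, 0 ≤ pXgS s x) (hpXgS1 : ∀ s, ∑ x, pXgS s x = 1)
    (hpX : ∀ x, pX x = ∑ s, pS s * pXgS s x) :
    ((q ≤ p → MonotoneOn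
        (fun α => (1 + (Real.exp α - 1) * p) / (1 + (Real.exp α - 1) * q))
        (Set.Ici (0 : ℝ))) ∧
     (p ≤ q → AntitoneOn
        (fun α => (1 + (Real.exp α - 1) * p) / (1 + (Real.exp α - 1) * q))
        (Set.Ici (0 : ℝ)))) ∧
    MonotoneOn
      (fun α => Finset.univ.sup' Finset.univ_nonempty
        (fun xs : X × S =>
          |Real.log ((1 + (Real.exp α - 1) * pXgS xs.2 xs.1) /
            (1 + (Real.exp α - 1) * pX xs.1))|))
      (Set.Ici (0 : ℝ)) ∧
    Finset.univ.sup' Finset.univ_nonempty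
      (fun xs : X × S =>
        |Real.log ((1 + (Real.exp 0 - 1) * pXgS xs.2 xs.1) /
          (1 + (Real.exp 0 - 1) * pX xs.1))|) = 0 := by
  have hpX0 : ∀ x, 0 ≤ pX x := fun x => by
    rw [hpX x]
    exact Finset.sum_nonneg fun s _ => mul_nonneg (hpS s) (hpXgS s x)
  refine ⟨⟨fun h => grr_mono_aux hq.1 h, fun h => grr_anti_aux hp.1 h⟩, ?_, ?_⟩
  · intro x hx y hy hxy
    apply Finset.sup'_le
    intro xs _
    refine le_trans (grr_abs_log_mono (hpXgS xs.2 xs.1) (hpX0 xs.1) hx hy hxy) ?_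
    exact Finset.le_sup' (fun xs : X × S =>
      |Real.log ((1 + (Real.exp y - 1) * pXgS xs.2 xs.1) /
        (1 + (Real.exp y - 1) * pX xs.1))|) (Finset.mem_univ xs)
  · have : ∀ xs : X × S,
        |Real.log ((1 + (Real.exp 0 - 1) * pXgS xs.2 xs.1) /
          (1 + (Real.exp 0 - 1) * pX xs.1))| = 0 := by
      intro xs; simp [Real.exp_zero]
    rw [Finset.sup'_congr Finset.univ_nonempty rfl (fun xs _ => this xs)]
    simp
end

section
/- Let Δ be the ε-LIP polytope { v in the simplex on 𝒳 : e^{-ε} p_s ≤ Σ_x p_{s|x} v_x ≤ e^ε p_s for all s }. Any mechanism (R, q) satisfying the ε-LIP constraints (each posterior column R_{X|y} ∈ Δ, Rq = p_X) has I(X;Y) at most H(p_X) − min { Σ_i α_i H(v_i) : α_i ≥ 0, Σ_i α_i v_i = p_X }, where v_1,...,v_M are the vertices of Δ; i.e., the optimum over mechanisms with posteriors in Δ is attained with all posterior columns at vertices of Δ. -/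
/-!
Every posterior column `R y` lies in `Δ`, a compact convex polytope, hence (Krein–Milman, with
finitely many extreme points) is a convex combination `∑ i, λ_y i • v i` of its vertices. Splitting
the output `y` into outputs with posteriors `v i` and weights `q y * λ_y i` keeps the marginal
`pX`, and by concavity of the entropy it does not increase the conditional entropy
`∑ y, q y * H (R y)`. So `∑ y, q y * H (R y)` dominates the infimum over vertex mixtures, and
`I(X;Y) = H(pX) - ∑ y, q y * H (R y)`.
-/

open Real Finset Set

noncomputable def shannonEntropy {ι : Type*} [Fintype ι] (w : ι → ℝ) : ℝ :=
  ∑ x, negMulLog (w x)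

section Entropy

variable {ι κ : Type*} [Fintype ι] [Fintype κ]

theorem shannonEntropy_eq_neg_sum_mul_log (w : ι → ℝ) :
    shannonEntropy w = -∑ x, w x * log (w x) := by
  simp only [shannonEntropy, negMulLog, neg_mul, sum_neg_distrib]

theorem shannonEntropy_nonneg {w : ι → ℝ} (hw : w ∈ stdSimplex ℝ ι) : 0 ≤ shannonEntropy w :=
  sum_nonneg fun x _ =>
    negMulLog_nonneg (mem_Icc_of_mem_stdSimplex hw x).1 (mem_Icc_of_mem_stdSimplex hw x).2

theorem sum_mul_shannonEntropy_le {w : κ → ℝ} {v : κ → ι → ℝ} (hw₀ : ∀ i, 0 ≤ w i)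
    (hw₁ : ∑ i, w i = 1) (hv : ∀ i x, 0 ≤ v i x) :
    ∑ i, w i * shannonEntropy (v i) ≤ shannonEntropy (∑ i, w i • v i) := by
  simp only [shannonEntropy, mul_sum]
  rw [sum_comm]
  refine sum_le_sum fun x _ => ?_
  simpa only [smul_eq_mul, Finset.sum_apply, Pi.smul_apply] using
    concaveOn_negMulLog.le_map_sum (t := univ) (p := fun i => v i x)
      (fun i _ => hw₀ i) hw₁ (fun i _ => hv i x)

theorem sum_mul_log_div_eq_shannonEntropy_sub {p : ι → ℝ} {q : κ → ℝ} {R : κ → ι → ℝ}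
    (hp : ∀ x, p x ≠ 0) (hmarg : ∀ x, ∑ y, R y x * q y = p x) :
    ∑ y, ∑ x, q y * R y x * log (R y x / p x)
      = shannonEntropy p - ∑ y, q y * shannonEntropy (R y) := by
  have hterm : ∀ y x, q y * R y x * log (R y x / p x)
      = q y * (R y x * log (R y x)) - R y x * q y * log (p x) := by
    intro y x
    rcases eq_or_ne (R y x) 0 with h | h
    · simp [h]
    · rw [log_div h (hp x)]; ring
  have hcross : ∑ y, ∑ x, R y x * q y * log (p x) = ∑ x, p x * log (p x) := by
    rw [sum_comm]
    simp only [← sum_mul, hmarg]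
  simp only [hterm, sum_sub_distrib, hcross, shannonEntropy_eq_neg_sum_mul_log, mul_neg,
    sum_neg_distrib, mul_sum]
  ring

end Entropy

section Polytope

variable {ι κ : Type*} [Fintype ι]

theorem exists_weights_of_mem_convexHull_range {E : Type*} [AddCommGroup E] [Module ℝ E]
    [Fintype κ] {v : κ → E} {z : E} (hz : z ∈ convexHull ℝ (range v)) :
    ∃ w : κ → ℝ, (∀ i, 0 ≤ w i) ∧ ∑ i, w i = 1 ∧ ∑ i, w i • v i = z := by
  classical
  rw [convexHull_range_eq_exists_affineCombination] at hz
  obtain ⟨s, w, hw₀, hw₁, rfl⟩ := hz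
  have hsum : ∑ i, Set.indicator (↑s) w i = 1 := by
    rw [← hw₁, sum_indicator_subset w (subset_univ s)]
  refine ⟨Set.indicator (↑s) w, fun i => Set.indicator_nonneg hw₀ i, hsum, ?_⟩
  rw [affineCombination_indicator_subset w v (subset_univ s),
    affineCombination_eq_linear_combination _ _ _ hsum]

theorem convexHull_extremePoints_eq_of_finite {E : Type*} [AddCommGroup E] [Module ℝ E]
    [TopologicalSpace E] [T2Space E] [IsTopologicalAddGroup E] [ContinuousSMul ℝ E]
    [LocallyConvexSpace ℝ E] {s : Set E} (hscomp : IsCompact s) (hsconv : Convex ℝ s)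
    (hfin : (s.extremePoints ℝ).Finite) :
    convexHull ℝ (s.extremePoints ℝ) = s :=
  (hfin.isClosed_convexHull ℝ).closure_eq.symm.trans
    (closure_convexHull_extremePoints hscomp hsconv)

def constrainedSimplex (A : ι → κ → ℝ) (lo hi : κ → ℝ) : Set (ι → ℝ) :=
  {w | (∑ x, w x = 1) ∧ (∀ x, 0 ≤ w x) ∧
    ∀ s, lo s ≤ (∑ x, A x s * w x) ∧ (∑ x, A x s * w x) ≤ hi s}

variable (A : ι → κ → ℝ) (lo hi : κ → ℝ)

theorem constrainedSimplex_eq_inter :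
    constrainedSimplex A lo hi
      = stdSimplex ℝ ι ∩ ⋂ s, (fun w => ∑ x, A x s * w x) ⁻¹' Icc (lo s) (hi s) := by
  ext w
  simp only [constrainedSimplex, stdSimplex, mem_ofPred_eq, mem_inter_iff, mem_iInter,
    Set.mem_preimage, Set.mem_Icc]
  tauto

theorem constrainedSimplex_subset_stdSimplex : constrainedSimplex A lo hi ⊆ stdSimplex ℝ ι := by
  rw [constrainedSimplex_eq_inter]
  exact inter_subset_left

theorem convex_constrainedSimplex : Convex ℝ (constrainedSimplex A lo hi) := by
  rw [constrainedSimplex_eq_inter]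
  refine (convex_stdSimplex ℝ ι).inter (convex_iInter fun s => (convex_Icc _ _).is_linear_preimage ?_)
  constructor
  · intro w w'
    simp only [Pi.add_apply, mul_add, sum_add_distrib]
  · intro c w
    simp only [Pi.smul_apply, smul_eq_mul, mul_sum]
    exact sum_congr rfl fun x _ => by ring

theorem isCompact_constrainedSimplex : IsCompact (constrainedSimplex A lo hi) := by
  rw [constrainedSimplex_eq_inter]
  refine (isCompact_stdSimplex ℝ ι).inter_right (isClosed_iInter fun s => isClosed_Icc.preimage ?_)
  fun_prop

end Polytope

theorem sInf_sum_mul_shannonEntropy_le {ι κ : Type*} [Fintype ι] [Fintype κ] {M : ℕ}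
    {v : Fin M → ι → ℝ} (hv : ∀ i, v i ∈ stdSimplex ℝ ι) {p : ι → ℝ} {q : κ → ℝ}
    {R : κ → ι → ℝ} (hq : ∀ y, 0 ≤ q y) (hR : ∀ y, R y ∈ convexHull ℝ (range v))
    (hmarg : ∀ x, ∑ y, R y x * q y = p x) :
    sInf {t : ℝ | ∃ β : Fin M → ℝ, (∀ i, 0 ≤ β i) ∧ (∀ x, ∑ i, β i * v i x = p x) ∧
        t = ∑ i, β i * shannonEntropy (v i)}
      ≤ ∑ y, q y * shannonEntropy (R y) := by
  choose lam hlam₀ hlam₁ hlamR using fun y => exists_weights_of_mem_convexHull_range (hR y)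
  have hbdd : BddBelow {t : ℝ | ∃ β : Fin M → ℝ, (∀ i, 0 ≤ β i) ∧
      (∀ x, ∑ i, β i * v i x = p x) ∧ t = ∑ i, β i * shannonEntropy (v i)} := by
    refine ⟨0, ?_⟩
    rintro t ⟨β, hβ, -, rfl⟩
    exact sum_nonneg fun i _ => mul_nonneg (hβ i) (shannonEntropy_nonneg (hv i))
  set β : Fin M → ℝ := fun i => ∑ y, q y * lam y i
  have hβ₀ : ∀ i, 0 ≤ β i := fun i => sum_nonneg fun y _ => mul_nonneg (hq y) (hlam₀ y i)
  have hβp : ∀ x, ∑ i, β i * v i x = p x := by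
    intro x
    simp only [β, ← hmarg, ← hlamR, sum_mul, Finset.sum_apply, Pi.smul_apply, smul_eq_mul]
    rw [sum_comm]
    exact sum_congr rfl fun y _ => sum_congr rfl fun i _ => by ring
  refine (csInf_le hbdd ⟨β, hβ₀, hβp, rfl⟩).trans ?_
  calc ∑ i, β i * shannonEntropy (v i)
      = ∑ y, q y * ∑ i, lam y i * shannonEntropy (v i) := by
        simp only [β, sum_mul, mul_sum]
        rw [sum_comm]
        exact sum_congr rfl fun y _ => sum_congr rfl fun i _ => by ring
    _ ≤ ∑ y, q y * shannonEntropy (R y) := by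
        refine sum_le_sum fun y _ => mul_le_mul_of_nonneg_left ?_ (hq y)
        rw [← hlamR y]
        exact sum_mul_shannonEntropy_le (hlam₀ y) (hlam₁ y) fun i x => (hv i).1 x

theorem opt_lip_bound_via_vertices_general
    {a c M b : ℕ}
    (pX : Fin a → ℝ) (pSgX : Fin a → Fin c → ℝ) (pS : Fin c → ℝ) (ε : ℝ)
    (hpX : ∀ x, 0 < pX x)
    (Δ : Set (Fin a → ℝ))
    (hΔ : Δ = {w : Fin a → ℝ | (∑ x, w x = 1) ∧ (∀ x, 0 ≤ w x) ∧
        ∀ s, Real.exp (-ε) * pS s ≤ (∑ x, pSgX x s * w x) ∧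
          (∑ x, pSgX x s * w x) ≤ Real.exp ε * pS s})
    (v : Fin M → Fin a → ℝ) (hv : Set.extremePoints ℝ Δ = Set.range v)
    (q : Fin b → ℝ) (R : Fin b → Fin a → ℝ)
    (hq : ∀ y, 0 ≤ q y)
    (hRΔ : ∀ y, R y ∈ Δ) (hmarg : ∀ x, ∑ y, R y x * q y = pX x) :
    (∑ y, ∑ x, q y * R y x * Real.log (R y x / pX x))
      ≤ (-∑ x, pX x * Real.log (pX x)) -
        sInf {t : ℝ | ∃ β : Fin M → ℝ, (∀ i, 0 ≤ β i) ∧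
          (∀ x, ∑ i, β i * v i x = pX x) ∧
          t = ∑ i, β i * (-∑ x, v i x * Real.log (v i x))} := by
  replace hΔ : Δ = constrainedSimplex pSgX (fun s => exp (-ε) * pS s) (fun s => exp ε * pS s) :=
    hΔ
  subst hΔ
  have hvΔ : ∀ i, v i ∈ stdSimplex ℝ (Fin a) := fun i =>
    constrainedSimplex_subset_stdSimplex _ _ _ (extremePoints_subset (hv ▸ mem_range_self i))
  have hhull : ∀ y, R y ∈ convexHull ℝ (range v) := by
    rw [← hv, convexHull_extremePoints_eq_of_finite (isCompact_constrainedSimplex _ _ _)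
      (convex_constrainedSimplex _ _ _) (hv ▸ finite_range v)]
    exact hRΔ
  rw [sum_mul_log_div_eq_shannonEntropy_sub (fun x => (hpX x).ne') hmarg]
  simp_rw [← shannonEntropy_eq_neg_sum_mul_log]
  exact sub_le_sub_left (sInf_sum_mul_shannonEntropy_le hvΔ hq hhull hmarg) _

/-- Any mechanism `(R, q)` whose posterior columns lie in the ε-LIP polytope `Δ`
(and satisfy the marginal consistency `Rq = pX`) has mutual information at most
`H(pX) − min {∑ i, β i * H(v i) : β ≥ 0, ∑ i, β i • v i = pX}`, where `v i` are the
vertices (extreme points) of `Δ`: the optimum is attained with all posterior columns at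
vertices of `Δ`. -/
theorem opt_lip_bound_via_vertices
    {a c M b : ℕ}
    (pX : Fin a → ℝ) (pSgX : Fin a → Fin c → ℝ) (pS : Fin c → ℝ) (ε : ℝ)
    (hε : 0 ≤ ε) (hpX : ∀ x, 0 < pX x) (hpX1 : ∑ x, pX x = 1)
    (hpSgX : ∀ x s, 0 ≤ pSgX x s) (hpSgX1 : ∀ x, ∑ s, pSgX x s = 1)
    (hpS : ∀ s, pS s = ∑ x, pSgX x s * pX x)
    (Δ : Set (Fin a → ℝ))
    (hΔ : Δ = {w : Fin a → ℝ | (∑ x, w x = 1) ∧ (∀ x, 0 ≤ w x) ∧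
        ∀ s, Real.exp (-ε) * pS s ≤ (∑ x, pSgX x s * w x) ∧
          (∑ x, pSgX x s * w x) ≤ Real.exp ε * pS s})
    (v : Fin M → Fin a → ℝ) (hv : Set.extremePoints ℝ Δ = Set.range v)
    (q : Fin b → ℝ) (R : Fin b → Fin a → ℝ)
    (hq : ∀ y, 0 ≤ q y) (hq1 : ∑ y, q y = 1)
    (hRΔ : ∀ y, R y ∈ Δ) (hmarg : ∀ x, ∑ y, R y x * q y = pX x) :
    (∑ y, ∑ x, q y * R y x * Real.log (R y x / pX x))
      ≤ (-∑ x, pX x * Real.log (pX x)) -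
        sInf {t : ℝ | ∃ β : Fin M → ℝ, (∀ i, 0 ≤ β i) ∧
          (∀ x, ∑ i, β i * v i x = pX x) ∧
          t = ∑ i, β i * (-∑ x, v i x * Real.log (v i x))} :=
  opt_lip_bound_via_vertices_general pX pSgX pS ε hpX Δ hΔ v hv q R hq hRΔ hmarg
end
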